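/- arXiv:1705.04525 — 4 statements merged into one kernel-verified Lean document; each statement's English description precedes it below -/
import Mathlib

section
/- Let V ⊆ ℝⁿ be a Zariski closed set and X ⊆ V a subset. Suppose f : X → ℝ is such that for each point x ∈ X there exist a Zariski open neighborhood U_x ⊆ ℝⁿ of x and two polynomial functions P_x, Q_x : ℝⁿ → ℝ with U_x ⊆ ℝⁿ \ Z(Q_x) and f = P_x / Q_x on X ∩ U_x. Then there exist two polynomial functions P, Q : ℝⁿ → ℝ such that X ⊆ ℝⁿ \ Z(Q) and f = P/Q on X. -/
/-!
By Hilbert's basis theorem the ideal generated by the denominators `S_x` of the local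
representations is finitely generated, so finitely many of the Zariski open sets
`{S_x ≠ 0}` already cover `X`. On that finite cover the local fractions `P_i / Q_i` are glued
by the sums of squares `P = ∑ S_i² Q_i P_i` and `Q = ∑ S_i² Q_i²`: at a point `y ∈ X` every
term with `S_i(y) ≠ 0` satisfies `S_i² Q_i P_i = f(y) S_i² Q_i²`, every other term vanishes,
and at least one term of `Q(y)` is positive.
-/

open MvPolynomial

namespace MvPolynomial

theorem exists_finset_cover_of_cover {R σ ι : Type*} [CommRing R] [IsNoetherianRing R]
    [Finite σ] (s : ι → MvPolynomial σ R) {X : Set (σ → R)}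
    (hX : X ⊆ ⋃ i, {y | eval y (s i) ≠ 0}) :
    ∃ I : Finset ι, X ⊆ ⋃ i ∈ I, {y | eval y (s i) ≠ 0} := by
  classical
  obtain ⟨T, hTs, hspan⟩ :=
    (Submodule.fg_span_iff_fg_span_finset_subset (Set.range s)).1 (IsNoetherian.noetherian (R := MvPolynomial σ R) _)
  obtain ⟨I, -, rfl⟩ := Finset.subset_set_image_iff.1 (Set.image_univ ▸ hTs)
  refine ⟨I, fun y hy => ?_⟩
  by_contra hy_uncovered
  simp only [Set.mem_iUnion, Set.mem_ofPred_eq, not_exists, not_not] at hy_uncovered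
  obtain ⟨i, hi⟩ := Set.mem_iUnion.1 (hX hy)
  have hspan_le : Ideal.span (Set.range s) ≤ RingHom.ker (eval y) := by
    change Submodule.span _ _ ≤ _
    rw [hspan, Finset.coe_image, ← Ideal.span, Ideal.span_le]
    rintro _ ⟨j, hj, rfl⟩
    exact hy_uncovered j hj
  exact hi (hspan_le (Ideal.subset_span ⟨i, rfl⟩))

section Gluing

variable {R σ ι : Type*} [Field R] {S P Q : ι → MvPolynomial σ R} {I : Finset ι} {y : σ → R}

theorem eval_sum_sq_mul_pos [LinearOrder R] [IsStrictOrderedRing R] (hy : ∃ i ∈ I, eval y (S i) ≠ 0)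
    (hQ : ∀ i, eval y (S i) ≠ 0 → eval y (Q i) ≠ 0) :
    0 < eval y (∑ i ∈ I, (S i * Q i) ^ 2) := by
  obtain ⟨i, hi, hSi⟩ := hy
  have hQi := hQ i hSi
  simp only [map_sum, map_pow, map_mul]
  exact Finset.sum_pos' (fun j _ => sq_nonneg _) ⟨i, hi, by positivity⟩

theorem eval_sum_sq_mul_mul_eq {a : R}
    (hQ : ∀ i, eval y (S i) ≠ 0 → eval y (Q i) ≠ 0)
    (hf : ∀ i, eval y (S i) ≠ 0 → a = eval y (P i) / eval y (Q i)) :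
    eval y (∑ i ∈ I, S i ^ 2 * Q i * P i) = a * eval y (∑ i ∈ I, (S i * Q i) ^ 2) := by
  simp only [map_sum, map_mul, map_pow, Finset.mul_sum]
  refine Finset.sum_congr rfl fun i _ => ?_
  by_cases hSi : eval y (S i) = 0
  · simp [hSi]
  · rw [hf i hSi]
    field_simp [hQ i hSi]

end Gluing

end MvPolynomial

theorem stmt_0_general (n : ℕ) (X : Set (Fin n → ℝ))
    (f : (Fin n → ℝ) → ℝ)
    (hloc : ∀ x ∈ X, ∃ S P Q : MvPolynomial (Fin n) ℝ,
      eval x S ≠ 0 ∧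
      (∀ y : Fin n → ℝ, eval y S ≠ 0 → eval y Q ≠ 0) ∧
      (∀ y ∈ X, eval y S ≠ 0 → f y = eval y P / eval y Q)) :
    ∃ P Q : MvPolynomial (Fin n) ℝ,
      (∀ y ∈ X, eval y Q ≠ 0) ∧ (∀ y ∈ X, f y = eval y P / eval y Q) := by
  choose S P Q hS hQ hf using fun x : X => hloc x x.2
  obtain ⟨I, hI⟩ := exists_finset_cover_of_cover S fun y hy =>
    Set.mem_iUnion.2 ⟨⟨y, hy⟩, hS ⟨y, hy⟩⟩
  have hcover : ∀ y ∈ X, ∃ i ∈ I, eval y (S i) ≠ 0 := fun y hy => by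
    simpa using hI hy
  refine ⟨∑ i ∈ I, S i ^ 2 * Q i * P i, ∑ i ∈ I, (S i * Q i) ^ 2,
    fun y hy => (eval_sum_sq_mul_pos (hcover y hy) fun i => hQ i y).ne', fun y hy => ?_⟩
  rw [eval_sum_sq_mul_mul_eq (fun i => hQ i y) (fun i => hf i y hy),
    mul_div_cancel_right₀ _ (eval_sum_sq_mul_pos (hcover y hy) fun i => hQ i y).ne']

/-- Lemma 2.2 (d) ⟹ (e): local rational representations of `f` on Zariski open
neighborhoods glue to a global representation `f = P/Q` with `Q` nonvanishing on `X`. -/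
theorem stmt_0 (n : ℕ) (V X : Set (Fin n → ℝ))
    (hV : ∃ g : MvPolynomial (Fin n) ℝ, V = {x | eval x g = 0})
    (hXV : X ⊆ V) (f : (Fin n → ℝ) → ℝ)
    (hloc : ∀ x ∈ X, ∃ S P Q : MvPolynomial (Fin n) ℝ,
      eval x S ≠ 0 ∧
      (∀ y : Fin n → ℝ, eval y S ≠ 0 → eval y Q ≠ 0) ∧
      (∀ y ∈ X, eval y S ≠ 0 → f y = eval y P / eval y Q)) :
    ∃ P Q : MvPolynomial (Fin n) ℝ,
      (∀ y ∈ X, eval y Q ≠ 0) ∧ (∀ y ∈ X, f y = eval y P / eval y Q) :=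
  stmt_0_general n X f hloc
end

section
/- Let V be a real algebraic set in ℝᵐ and W ⊆ V a Zariski closed subset. If f : W → ℝ is a regular function, i.e. f = φ/ψ on W for regular functions φ, ψ : V → ℝ with W ∩ Z(ψ) = ∅, and α : V → ℝ is a regular function with Z(α) = W, then the function F := (φ·ψ)/(α² + ψ²) is a regular function on all of V (its denominator never vanishes on V) and F restricted to W equals f. -/
/-- Lemma 3.1 computation: if `f = φ/ψ` on `W` with `ψ` nonvanishing on `W`, and
`α` vanishes exactly on `W` (within `V`), then `α² + ψ²` vanishes nowhere on `V`
and `F = φψ/(α² + ψ²)` restricts to `f` on `W`. -/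
theorem stmt_3 (m : ℕ) (V W : Set (Fin m → ℝ)) (hWV : W ⊆ V)
    (φ ψ α : (Fin m → ℝ) → ℝ) (f : (Fin m → ℝ) → ℝ)
    (hψ : ∀ x ∈ W, ψ x ≠ 0)
    (hα : ∀ x ∈ V, (α x = 0 ↔ x ∈ W))
    (hf : ∀ x ∈ W, f x = φ x / ψ x) :
    (∀ x ∈ V, α x ^ 2 + ψ x ^ 2 ≠ 0) ∧
      (∀ x ∈ W, (φ x * ψ x) / (α x ^ 2 + ψ x ^ 2) = f x) := by
  refine ⟨fun x hx hzero => ?_, fun x hx => ?_⟩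
  · obtain ⟨hαx, hψx⟩ := mul_self_add_mul_self_eq_zero.mp (by simpa only [sq] using hzero)
    exact hψ x ((hα x hx).mp hαx) hψx
  · have hαx : α x = 0 := (hα x (hWV hx)).mpr hx
    rw [hf x hx, hαx, zero_pow two_ne_zero, zero_add, sq]
    exact mul_div_mul_right (φ x) (ψ x) (hψ x hx)
end

section
/- Let V be a Noetherian topological space and S a finite partition of V into locally closed subsets (a stratification). Then for every nonempty closed irreducible subset Z ⊆ V there exists a stratum S ∈ S such that S ∩ Z is a nonempty open dense subset of Z. -/
/-!
By irreducibility, one of the finitely many closures `closure (S ∩ Z)` contains `Z`. Since `Z`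
then lies in `closure S`, it meets the open coborder `(closure S \ S)ᶜ` of the locally closed
stratum `S` exactly in `S ∩ Z`.
-/

open Set

theorem IsIrreducible.exists_subset_closure_inter_of_subset_sUnion {X : Type*}
    [TopologicalSpace X] {Z : Set X} (hZ : IsIrreducible Z) {𝒮 : Set (Set X)} (h𝒮 : 𝒮.Finite)
    (hcover : Z ⊆ ⋃₀ 𝒮) : ∃ S ∈ 𝒮, Z ⊆ closure (S ∩ Z) := by
  classical
  have hcover' : Z ⊆ ⋃₀ ↑(h𝒮.toFinset.image fun S ↦ closure (S ∩ Z)) := by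
    intro x hx
    obtain ⟨S, hS, hxS⟩ := hcover hx
    exact ⟨closure (S ∩ Z), by simpa using ⟨S, hS, rfl⟩, subset_closure ⟨hxS, hx⟩⟩
  obtain ⟨_, hmem, hZS⟩ := isIrreducible_iff_sUnion_isClosed.mp hZ _
    (by simp [isClosed_closure]) hcover'
  obtain ⟨S, hS, rfl⟩ := Finset.mem_image.mp hmem
  exact ⟨S, h𝒮.mem_toFinset.mp hS, hZS⟩

theorem inter_coborder_of_subset_closure {X : Type*} [TopologicalSpace X] {A Z : Set X}
    (hZA : Z ⊆ closure A) : Z ∩ coborder A = Z ∩ A := by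
  rw [coborder_eq_union_closure_compl, inter_union_distrib_left,
    ← sdiff_eq, sdiff_eq_empty.mpr hZA, union_empty]

theorem stmt_5_general {V : Type*} [TopologicalSpace V] (𝒮 : Set (Set V))
    (hfin : 𝒮.Finite) (hlc : ∀ S ∈ 𝒮, IsLocallyClosed S)
    (hcover : ⋃₀ 𝒮 = Set.univ)
    (Z : Set V) (hZirr : IsIrreducible Z) :
    ∃ S ∈ 𝒮, (S ∩ Z).Nonempty ∧
      (∃ U : Set V, IsOpen U ∧ S ∩ Z = Z ∩ U) ∧
      Z ⊆ closure (S ∩ Z) := by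
  obtain ⟨S, hS, hdense⟩ :=
    hZirr.exists_subset_closure_inter_of_subset_sUnion hfin (hcover ▸ subset_univ Z)
  have hopen : S ∩ Z = Z ∩ coborder S := by
    rw [inter_comm, inter_coborder_of_subset_closure
      (hdense.trans (closure_mono inter_subset_left))]
  exact ⟨S, hS, (hZirr.nonempty.mono hdense).of_closure,
    ⟨coborder S, (hlc S hS).isOpen_coborder, hopen⟩, hdense⟩

/-- If `𝒮` is a finite partition of a topological space `V` into pairwise disjoint
locally closed subsets, then for every nonempty closed irreducible `Z ⊆ V` some
stratum `S ∈ 𝒮` meets `Z` in a nonempty subset that is open and dense in `Z`. -/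
theorem stmt_5 {V : Type*} [TopologicalSpace V] (𝒮 : Set (Set V))
    (hfin : 𝒮.Finite) (hlc : ∀ S ∈ 𝒮, IsLocallyClosed S)
    (hdisj : 𝒮.PairwiseDisjoint id) (hcover : ⋃₀ 𝒮 = Set.univ)
    (Z : Set V) (hZc : IsClosed Z) (hZirr : IsIrreducible Z) :
    ∃ S ∈ 𝒮, (S ∩ Z).Nonempty ∧
      (∃ U : Set V, IsOpen U ∧ S ∩ Z = Z ∩ U) ∧
      Z ⊆ closure (S ∩ Z) :=
  stmt_5_general 𝒮 hfin hlc hcover Z hZirr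
end

section
/- Let Δ ⊆ ℝᵐ be a d-simplex with (d−1)-dimensional faces Δ₀,…,Δ_d, let H be the affine span of Δ and H_i the affine span of Δ_i. Suppose φ : H → ℝ is continuous with φ = 0 on D := H₀ ∪ ⋯ ∪ H_d. Then for every ε > 0 there exists a polynomial function p : H → ℝ vanishing identically on D and satisfying |φ(x) − p(x)| < ε for all x ∈ Δ. -/
/-!
Multiply the barycentric coordinates of the simplex, each extended to an affine function on `ℝᵐ`
and hence a polynomial, to get `q` whose zero set in `H` is exactly `D`. If `r` approximates `φ`
on `Δ` and `w = c q²` with `0 ≤ w ≤ 1` on `Δ`, then `r (1 - (1 - w)ⁿ)` is a multiple of `q`, and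
it approximates `φ` for large `n`: by compactness `φ` is uniformly small where `w` is small, and
`(1 - w)ⁿ` is uniformly small elsewhere.
-/

open MvPolynomial Filter Topology

theorem AffineMap.exists_mvPolynomial_eval_eq {σ R : Type*} [Fintype σ] [CommRing R]
    (f : (σ → R) →ᵃ[R] R) : ∃ P : MvPolynomial σ R, ∀ x, eval x P = f x := by
  classical
  refine ⟨C (f 0) + ∑ k, C (f.linear fun j => if k = j then 1 else 0) * X k, fun x => ?_⟩
  rw [congrFun f.decomp x, Pi.add_apply, f.linear.pi_apply_eq_sum_univ x]
  simp [add_comm, mul_comm]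

theorem AffineIndependent.exists_affineMap_apply_eq_ite {ι k V P : Type*} [Field k]
    [AddCommGroup V] [Module k V] [AddTorsor V P] [DecidableEq ι] {v : ι → P}
    (hv : AffineIndependent k v) :
    ∃ f : ι → P →ᵃ[k] k, ∀ i j, f i (v j) = if i = j then 1 else 0 := by
  classical
  obtain ⟨t, hvt, ht, hspan⟩ := exists_subset_affineIndependent_affineSpan_eq_top hv.range
  let b : AffineBasis t k P := ⟨((↑) : t → P), ht, by rwa [Subtype.range_coe]⟩
  let e : ι → t := fun i => ⟨v i, hvt (Set.mem_range_self i)⟩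
  refine ⟨fun i => b.coord (e i), fun i j => ?_⟩
  rw [show v j = b (e j) from rfl, b.coord_apply]
  simp [e, hv.injective.eq_iff]

theorem AffineMap.mem_affineSpan_image_ne_of_apply_eq_zero {ι k V P : Type*} [Fintype ι]
    [Field k] [AddCommGroup V] [Module k V] [AddTorsor V P] [DecidableEq ι] {v : ι → P}
    {f : P →ᵃ[k] k} {i : ι} (hf : ∀ j, f (v j) = if i = j then 1 else 0) {x : P}
    (hx : x ∈ affineSpan k (Set.range v)) (hfx : f x = 0) :
    x ∈ affineSpan k (v '' {j | j ≠ i}) := by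
  obtain ⟨w, hw, rfl⟩ := eq_affineCombination_of_mem_affineSpan_of_fintype hx
  have hwi : w i = 0 := by
    rw [← hfx, Finset.univ.map_affineCombination v w hw,
      Finset.univ.affineCombination_eq_linear_combination _ _ hw]
    simp [hf]
  exact affineCombination_mem_affineSpan_image hw (fun j _ hj => by simp_all) v

theorem AffineIndependent.exists_mvPolynomial_vanishing_facets {ι σ k : Type*} [Fintype ι]
    [Fintype σ] [Field k] {v : ι → σ → k} (hv : AffineIndependent k v) :
    ∃ q : MvPolynomial σ k,
      (∀ x ∈ ⋃ i, (affineSpan k (v '' {j | j ≠ i}) : Set (σ → k)), eval x q = 0) ∧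
      ∀ x ∈ affineSpan k (Set.range v), eval x q = 0 →
        x ∈ ⋃ i, (affineSpan k (v '' {j | j ≠ i}) : Set (σ → k)) := by
  classical
  obtain ⟨f, hf⟩ := hv.exists_affineMap_apply_eq_ite
  choose P hP using fun i => (f i).exists_mvPolynomial_eval_eq
  have heval (x : σ → k) : eval x (∏ i, P i) = ∏ i, f i x := by simp [hP]
  refine ⟨∏ i, P i, fun x hx => ?_, fun x hx hq => ?_⟩
  · obtain ⟨i, hi⟩ := Set.mem_iUnion.1 hx
    have hfacet : Set.EqOn (f i) (AffineMap.const k _ 0) (v '' {j | j ≠ i}) := by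
      rintro - ⟨j, hj, rfl⟩
      simp [hf, Ne.symm hj]
    rw [heval]
    exact Finset.prod_eq_zero (Finset.mem_univ i) (AffineMap.eqOn_affineSpan hfacet hi)
  · obtain ⟨i, -, hi⟩ := Finset.prod_eq_zero_iff.1 (heval x ▸ hq)
    exact Set.mem_iUnion.2 ⟨i, (f i).mem_affineSpan_image_ne_of_apply_eq_zero (hf i) hx hi⟩

theorem exists_mvPolynomial_forall_abs_sub_lt {σ : Type*} {K : Set (σ → ℝ)} (hK : IsCompact K)
    {φ : (σ → ℝ) → ℝ} (hφ : ContinuousOn φ K) {ε : ℝ} (hε : 0 < ε) :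
    ∃ r : MvPolynomial σ ℝ, ∀ x ∈ K, |φ x - eval x r| < ε := by
  have : CompactSpace K := isCompact_iff_compactSpace.mp hK
  let coord : σ → C(K, ℝ) := fun k => ⟨fun x => (x : σ → ℝ) k,
    (continuous_apply k).comp continuous_subtype_val⟩
  let A : Subalgebra ℝ C(K, ℝ) := (aeval coord).range
  have hsep : A.SeparatesPoints := by
    intro x y hxy
    obtain ⟨k, hk⟩ := Function.ne_iff.mp (Subtype.coe_injective.ne hxy)
    exact ⟨coord k, ⟨coord k, ⟨X k, aeval_X _ _⟩, rfl⟩, hk⟩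
  have heval (r : MvPolynomial σ ℝ) (x : K) : aeval coord r x = eval (x : σ → ℝ) r := by
    induction r using MvPolynomial.induction_on <;> simp_all [coord]
  obtain ⟨⟨g, r, rfl⟩, hg⟩ := ContinuousMap.exists_mem_subalgebra_near_continuous_of_separatesPoints
    A hsep (K.domRestrict φ) hφ.domRestrict ε hε
  refine ⟨r, fun x hx => ?_⟩
  simpa [abs_sub_comm, heval] using hg ⟨x, hx⟩

theorem IsCompact.exists_pos_forall_abs_lt_of_eq_zero {X : Type*} [TopologicalSpace X]
    [T2Space X] {K : Set X} (hK : IsCompact K) {φ w : X → ℝ} (hφ : ContinuousOn φ K)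
    (hw : ContinuousOn w K) (hzero : ∀ x ∈ K, w x = 0 → φ x = 0) {η : ℝ} (hη : 0 < η) :
    ∃ δ > 0, ∀ x ∈ K, |w x| < δ → |φ x| < η := by
  have hS : IsCompact (K ∩ {x | η ≤ |φ x|}) :=
    hK.of_isClosed_subset (hφ.abs.preimage_isClosed_of_isClosed hK.isClosed isClosed_Ici)
      Set.inter_subset_left
  obtain ⟨δ, hδ, hδS⟩ := hS.exists_forall_le' (hw.abs.mono Set.inter_subset_left) (a := 0)
    fun x ⟨hxK, hx⟩ => abs_pos.2 fun h0 => by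
      simp only [Set.mem_ofPred_eq, hzero x hxK h0, abs_zero] at hx
      linarith
  exact ⟨δ, hδ, fun x hx hwx => not_le.1 fun hφx => (hδS x ⟨hx, hφx⟩).not_gt hwx⟩

theorem IsCompact.exists_forall_abs_mul_one_sub_pow_lt {X : Type*} [TopologicalSpace X]
    [T2Space X] {K : Set X} (hK : IsCompact K) {φ w : X → ℝ} (hφ : ContinuousOn φ K)
    (hw : ContinuousOn w K) (hw0 : ∀ x ∈ K, 0 ≤ w x) (hw1 : ∀ x ∈ K, w x ≤ 1)
    (hzero : ∀ x ∈ K, w x = 0 → φ x = 0) {η : ℝ} (hη : 0 < η) :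
    ∃ n : ℕ, ∀ x ∈ K, |φ x| * (1 - w x) ^ n < η := by
  obtain ⟨δ, hδ, hsmall⟩ := hK.exists_pos_forall_abs_lt_of_eq_zero hφ hw hzero hη
  obtain ⟨B, hB⟩ := hK.exists_bound_of_continuousOn hφ
  set t := max (1 - δ) 0
  have hlim : Tendsto (fun n : ℕ => B * t ^ n) atTop (𝓝 0) := by
    simpa using (tendsto_pow_atTop_nhds_zero_of_lt_one (le_max_right _ _)
      (max_lt (by linarith) one_pos)).const_mul B
  obtain ⟨n, hn⟩ := (hlim.eventually (gt_mem_nhds hη)).exists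
  refine ⟨n, fun x hx => ?_⟩
  have hu0 : 0 ≤ 1 - w x := sub_nonneg.2 (hw1 x hx)
  have hφB : |φ x| ≤ B := by simpa using hB x hx
  rcases lt_or_ge (w x) δ with hlt | hge
  · calc |φ x| * (1 - w x) ^ n ≤ |φ x| :=
          mul_le_of_le_one_right (abs_nonneg _) (pow_le_one₀ hu0 (by linarith [hw0 x hx]))
      _ < η := hsmall x hx (by rwa [abs_of_nonneg (hw0 x hx)])
  · calc |φ x| * (1 - w x) ^ n ≤ B * t ^ n :=
          mul_le_mul hφB (pow_le_pow_left₀ hu0 (le_max_of_le_left (by linarith)) n)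
            (pow_nonneg hu0 n) ((abs_nonneg _).trans hφB)
      _ < η := hn

theorem abs_sub_mul_one_sub_le {α : Type*} [CommRing α] [LinearOrder α] [IsStrictOrderedRing α]
    {a b u : α} (hu0 : 0 ≤ u) (hu1 : u ≤ 1) : |a - b * (1 - u)| ≤ |a| * u + |a - b| :=
  calc |a - b * (1 - u)| = |a * u + (a - b) * (1 - u)| := by ring_nf
    _ ≤ |a| * u + |a - b| * (1 - u) := by
      simpa [abs_mul, abs_of_nonneg hu0, abs_of_nonneg (sub_nonneg.2 hu1)] using
        abs_add_le (a * u) ((a - b) * (1 - u))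
    _ ≤ |a| * u + |a - b| := by
      gcongr
      exact mul_le_of_le_one_right (abs_nonneg _) (by linarith)

theorem MvPolynomial.exists_dvd_forall_abs_sub_lt {σ : Type*} {K : Set (σ → ℝ)}
    (hK : IsCompact K) {φ : (σ → ℝ) → ℝ} (hφ : ContinuousOn φ K) (q : MvPolynomial σ ℝ)
    (hq : ∀ x ∈ K, eval x q = 0 → φ x = 0) {ε : ℝ} (hε : 0 < ε) :
    ∃ p : MvPolynomial σ ℝ, q ∣ p ∧ ∀ x ∈ K, |φ x - eval x p| < ε := by
  obtain ⟨r, hr⟩ := exists_mvPolynomial_forall_abs_sub_lt hK hφ (half_pos hε)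
  obtain ⟨M, hM1, hM⟩ :=
    (hK.bddAbove_image ((continuous_eval q).pow 2).continuousOn).exists_ge 1
  set w : MvPolynomial σ ℝ := C M⁻¹ * q ^ 2
  have hw : ∀ x, eval x w = M⁻¹ * eval x q ^ 2 := by simp [w]
  have hw0 : ∀ x, 0 ≤ eval x w := fun x => by rw [hw]; positivity
  have hw1 : ∀ x ∈ K, eval x w ≤ 1 := fun x hx => by
    rw [hw]; exact inv_mul_le_one_of_le₀ (hM _ ⟨x, hx, rfl⟩) (by linarith)
  obtain ⟨n, hn⟩ := hK.exists_forall_abs_mul_one_sub_pow_lt hφ (continuous_eval w).continuousOn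
    (fun x _ => hw0 x) hw1
    (fun x hx h => hq x hx (by simpa [hw, (by linarith : M ≠ 0)] using h)) (half_pos hε)
  have hqw : q ∣ 1 - (1 - w) ^ n := by
    have : q ∣ w := dvd_mul_of_dvd_right (dvd_pow_self q two_ne_zero) _
    have h := sub_dvd_pow_sub_pow (1 : MvPolynomial σ ℝ) (1 - w) n
    rw [one_pow, sub_sub_cancel] at h
    exact this.trans h
  refine ⟨r * (1 - (1 - w) ^ n), dvd_mul_of_dvd_right hqw r, fun x hx => ?_⟩
  have hu0 : 0 ≤ 1 - eval x w := sub_nonneg.2 (hw1 x hx)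
  have := abs_sub_mul_one_sub_le (a := φ x) (b := eval x r)
    (pow_nonneg hu0 n) (pow_le_one₀ hu0 (by linarith [hw0 x]))
  simp only [map_mul, map_sub, map_pow, map_one]
  linarith [hn x hx, hr x hx]

/-- Final step in Lemma 3.7: a continuous function on the affine span `H` of a
`d`-simplex vanishing on the union `D` of the affine spans of its facets can be
approximated, uniformly on the simplex, by polynomial functions vanishing on `D`. -/
theorem stmt_6 (m d : ℕ) (v : Fin (d + 1) → (Fin m → ℝ))
    (hv : AffineIndependent ℝ v)
    (Δ : Set (Fin m → ℝ)) (hΔ : Δ = convexHull ℝ (Set.range v))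
    (H : AffineSubspace ℝ (Fin m → ℝ)) (hH : H = affineSpan ℝ (Set.range v))
    (D : Set (Fin m → ℝ))
    (hD : D = ⋃ i : Fin (d + 1),
      (affineSpan ℝ (v '' {j | j ≠ i}) : Set (Fin m → ℝ)))
    (φ : (Fin m → ℝ) → ℝ) (hφ : ContinuousOn φ (H : Set (Fin m → ℝ)))
    (hφ0 : ∀ x ∈ D, φ x = 0)
    (ε : ℝ) (hε : 0 < ε) :
    ∃ p : MvPolynomial (Fin m) ℝ,
      (∀ x ∈ D, eval x p = 0) ∧ ∀ x ∈ Δ, |φ x - eval x p| < ε := by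
  subst hΔ hH hD
  obtain ⟨q, hqD, hDq⟩ := hv.exists_mvPolynomial_vanishing_facets
  have hΔH : convexHull ℝ (Set.range v) ⊆ affineSpan ℝ (Set.range v) :=
    convexHull_subset_affineSpan _
  obtain ⟨p, ⟨s, rfl⟩, hp⟩ := MvPolynomial.exists_dvd_forall_abs_sub_lt
    ((Set.finite_range v).isCompact_convexHull (𝕜 := ℝ)) (hφ.mono hΔH) q
    (fun x hx hqx => hφ0 x (hDq x (hΔH hx) hqx)) hε
  exact ⟨q * s, fun x hx => by simp [hqD x hx], hp⟩
end
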